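/- The holomorphic vector field X = −zζ∂/∂z + (1−ζ^2)∂/∂ζ + iz^2∂/∂w is an infinitesimal automorphism of the model hypersurface {Im w = P}: Re( (1/(2i))·iz^2 + zζ·P_z − (1−ζ^2)·P_ζ ) = 0 identically in (z,ζ,\bar z,\bar ζ) with |ζ|<1. -/

import Mathlib

open Complex

noncomputable def P4 (z ζ zb ζb : ℂ) : ℂ :=
  (z * zb + (z ^ 2 * ζb + zb ^ 2 * ζ) / 2) / (1 - ζ * ζb)

noncomputable def Pz (z ζ zb ζb : ℂ) : ℂ :=
  deriv (fun s => P4 s ζ zb ζb) z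

noncomputable def Pzeta (z ζ zb ζb : ℂ) : ℂ :=
  deriv (fun s => P4 z s zb ζb) ζ

open ComplexConjugate

/-!
With `u := P_z = (z̄ + zζ̄)/(1 - ζζ̄)` one finds `P_ζ = u²/2` and `z + ζu = ū`, so the
expression equals `(z² + 2zζu - (1 - ζ²)u²)/2 = ((z + ζu)² - u²)/2 = (ū² - u²)/2`,
which is purely imaginary.
-/

theorem hasDerivAt_P4_fst (z ζ zb ζb : ℂ) :
    HasDerivAt (fun s => P4 s ζ zb ζb) ((zb + z * ζb) / (1 - ζ * ζb)) z := by
  have hnum : HasDerivAt (fun s : ℂ => s * zb + (s ^ 2 * ζb + zb ^ 2 * ζ) / 2)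
      (zb + z * ζb) z :=
    (((hasDerivAt_id z).mul_const zb).add
      ((((hasDerivAt_pow 2 z).mul_const ζb).add_const (zb ^ 2 * ζ)).div_const 2)).congr_deriv
      (by simp only [Nat.cast_ofNat]; ring)
  exact hnum.div_const _

theorem Pz_eq (z ζ zb ζb : ℂ) : Pz z ζ zb ζb = (zb + z * ζb) / (1 - ζ * ζb) :=
  (hasDerivAt_P4_fst z ζ zb ζb).deriv

theorem hasDerivAt_P4_snd {z ζ zb ζb : ℂ} (h : 1 - ζ * ζb ≠ 0) :
    HasDerivAt (fun s => P4 z s zb ζb) (((zb + z * ζb) / (1 - ζ * ζb)) ^ 2 / 2) ζ := by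
  have hnum : HasDerivAt (fun s : ℂ => z * zb + (z ^ 2 * ζb + zb ^ 2 * s) / 2)
      (zb ^ 2 / 2) ζ :=
    (((((hasDerivAt_id ζ).const_mul (zb ^ 2)).const_add (z ^ 2 * ζb)).div_const 2).const_add
      (z * zb)).congr_deriv (by simp)
  have hden : HasDerivAt (fun s : ℂ => 1 - s * ζb) (-ζb) ζ := by
    simpa using ((hasDerivAt_id ζ).mul_const ζb).const_sub 1
  refine (hnum.div hden h).congr_deriv ?_
  field_simp
  ring

theorem Pzeta_eq_Pz_sq_div_two {z ζ zb ζb : ℂ} (h : 1 - ζ * ζb ≠ 0) :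
    Pzeta z ζ zb ζb = Pz z ζ zb ζb ^ 2 / 2 := by
  rw [Pz_eq]
  exact (hasDerivAt_P4_snd h).deriv

theorem one_sub_mul_conj_ne_zero {ζ : ℂ} (hζ : ‖ζ‖ < 1) : 1 - ζ * conj ζ ≠ 0 := by
  rw [mul_conj, normSq_eq_norm_sq, ← ofReal_one, ← ofReal_sub, ofReal_ne_zero]
  nlinarith [norm_nonneg ζ]

theorem add_mul_Pz_conj {z ζ : ℂ} (h : 1 - ζ * conj ζ ≠ 0) :
    z + ζ * Pz z ζ (conj z) (conj ζ) = conj (Pz z ζ (conj z) (conj ζ)) := by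
  have h' : 1 - conj ζ * ζ ≠ 0 := by rwa [mul_comm]
  simp only [Pz_eq, map_div₀, map_add, map_sub, map_mul, map_one, conj_conj]
  field_simp
  ring

theorem re_conj_sq_sub_sq (w : ℂ) : (conj w ^ 2 - w ^ 2).re = 0 := by
  rw [← map_pow, sub_re, conj_re, sub_self]

/-- the field `X = -zζ∂/∂z + (1-ζ²)∂/∂ζ + iz²∂/∂w` is an
infinitesimal automorphism of `{Im w = P}`:
`Re((1/(2i))·iz² + zζ·P_z - (1-ζ²)·P_ζ) = 0` identically for `|ζ|<1`. -/
theorem infinitesimal_autom_g0s (z ζ : ℂ) (hζ : ‖ζ‖ < 1) :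
    ((1 / (2 * I)) * (I * z ^ 2) + z * ζ * Pz z ζ ((starRingEnd ℂ) z) ((starRingEnd ℂ) ζ)
      - (1 - ζ ^ 2) * Pzeta z ζ ((starRingEnd ℂ) z) ((starRingEnd ℂ) ζ)).re = 0 := by
  have h := one_sub_mul_conj_ne_zero hζ
  have hconj := add_mul_Pz_conj (z := z) h
  rw [Pzeta_eq_Pz_sq_div_two h]
  set u := Pz z ζ (conj z) (conj ζ)
  have hE : (1 / (2 * I)) * (I * z ^ 2) + z * ζ * u - (1 - ζ ^ 2) * (u ^ 2 / 2)
      = (conj u ^ 2 - u ^ 2) / 2 := by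
    rw [← hconj]
    field_simp
    ring
  rw [hE, div_ofNat_re, re_conj_sq_sub_sq, zero_div]
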